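/- arXiv:2404.18102 — 5 statements merged into one kernel-verified Lean document; each statement's English description precedes it below -/
import Mathlib

section
/- Let Omega be a set and let B_1,...,B_n : Omega -> R be linearly independent functions spanning a subspace S of the real-valued functions on Omega. For each i = 1,...,n let Omega_i be a subset of Omega and let K_i = { j : the restriction of B_j to Omega_i is not identically zero }. Suppose for each i: (a) i is in K_i; (b) the restrictions (B_j|_{Omega_i})_{j in K_i} are linearly independent; (c) there are maps c^{(i)}_j : (functions Omega -> R) -> R for j in K_i such that for every f in S one has sum_{j in K_i} c^{(i)}_j(f) * B_j(x) = f(x) for all x in Omega_i. Define Q(f) = sum_{i=1}^n c^{(i)}_i(f) * B_i. Then Q(f) = f for every f in S. -/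
/-! On each sub-domain `Om i`, a function `f = ∑ j, a j • B j` of `S` reduces to the sum over
`K i`, since the other `B j` vanish there. The local projector reproduces `f` on `Om i` by a
second combination of the same restricted functions, so linear independence of these
restrictions forces `c i j f = a j` for `j ∈ K i`; in particular `c i i f = a i`, and
`Q f = ∑ i, a i • B i = f`. -/

open Finset

section LocalCoefficients

variable {ι Ω R : Type*} [Semiring R] {B : ι → Ω → R} {U : Set Ω} {s : Finset ι}

theorem sum_mul_eq_sum_mul_of_vanishOn [Fintype ι] (hvanish : ∀ j ∉ s, ∀ x ∈ U, B j x = 0)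
    (a : ι → R) {x : Ω} (hx : x ∈ U) : ∑ j ∈ s, a j * B j x = ∑ j, a j * B j x :=
  sum_subset (subset_univ s) fun j _ hj => by rw [hvanish j hj x hx, mul_zero]

theorem LinearIndependent.eq_of_sum_mul_eqOn
    (hindep : LinearIndependent R fun j : s => U.domRestrict (B j)) {a c : ι → R}
    (heq : ∀ x ∈ U, ∑ j ∈ s, c j * B j x = ∑ j ∈ s, a j * B j x) : ∀ j ∈ s, c j = a j := by
  have hrestrict : ∑ j : s, c j • U.domRestrict (B j) = ∑ j : s, a j • U.domRestrict (B j) := by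
    funext ⟨x, hx⟩
    simp only [Finset.sum_apply, Pi.smul_apply, Set.domRestrict_apply, smul_eq_mul]
    rw [sum_coe_sort s fun j => c j * B j x, sum_coe_sort s fun j => a j * B j x]
    exact heq x hx
  intro j hj
  exact Fintype.linearIndependent_iffₛ.mp hindep _ _ hrestrict ⟨j, hj⟩

end LocalCoefficients

theorem quasi_interpolation_projector_general
    {Ω : Type*} {n : ℕ} (B : Fin n → Ω → ℝ)
    (S : Submodule ℝ (Ω → ℝ)) (hS : S = Submodule.span ℝ (Set.range B))
    (Om : Fin n → Set Ω)
    (K : Fin n → Finset (Fin n))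
    (hK : ∀ i j, j ∈ K i ↔ ¬ (∀ x ∈ Om i, B j x = 0))
    (hiK : ∀ i, i ∈ K i)
    (hindep : ∀ i, LinearIndependent ℝ
      (fun j : {j // j ∈ K i} => (Om i).restrict (B j.1)))
    (c : Fin n → Fin n → (Ω → ℝ) → ℝ)
    (hc : ∀ i, ∀ f ∈ S, ∀ x ∈ Om i, ∑ j ∈ K i, c i j f * B j x = f x) :
    ∀ f ∈ S, (fun x => ∑ i, c i i f * B i x) = f := by
  intro f hf
  obtain ⟨a, rfl⟩ := (Submodule.mem_span_range_iff_exists_fun ℝ).mp (hS ▸ hf)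
  have hvanish : ∀ i, ∀ j ∉ K i, ∀ x ∈ Om i, B j x = 0 := fun i j hj =>
    not_not.mp ((hK i j).not.mp hj)
  have hlocal : ∀ i, ∀ x ∈ Om i,
      ∑ j ∈ K i, c i j (∑ j, a j • B j) * B j x = ∑ j ∈ K i, a j * B j x := fun i x hx => by
    rw [hc i _ hf x hx, sum_mul_eq_sum_mul_of_vanishOn (hvanish i) a hx]
    simp only [Finset.sum_apply, Pi.smul_apply, smul_eq_mul]
  have hcoeff : ∀ i, c i i (∑ j, a j • B j) = a i := fun i =>
    (hindep i).eq_of_sum_mul_eqOn (hlocal i) i (hiK i)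
  funext x
  simp only [hcoeff, Finset.sum_apply, Pi.smul_apply, smul_eq_mul]

/-- General recipe for quasi-interpolation projectors: if each local projector
reproduces the restriction of the space `S` to the sub-domain `Ω i`, then the
global quasi-interpolant `Q f = ∑ i, c i i f • B i` reproduces all of `S`. -/
theorem quasi_interpolation_projector
    {Ω : Type*} {n : ℕ} (B : Fin n → Ω → ℝ)
    (hB : LinearIndependent ℝ B)
    (S : Submodule ℝ (Ω → ℝ)) (hS : S = Submodule.span ℝ (Set.range B))
    (Om : Fin n → Set Ω)
    (K : Fin n → Finset (Fin n))
    (hK : ∀ i j, j ∈ K i ↔ ¬ (∀ x ∈ Om i, B j x = 0))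
    (hiK : ∀ i, i ∈ K i)
    (hindep : ∀ i, LinearIndependent ℝ
      (fun j : {j // j ∈ K i} => (Om i).restrict (B j.1)))
    (c : Fin n → Fin n → (Ω → ℝ) → ℝ)
    (hc : ∀ i, ∀ f ∈ S, ∀ x ∈ Om i, ∑ j ∈ K i, c i j f * B j x = f x) :
    ∀ f ∈ S, (fun x => ∑ i, c i i f * B i x) = f :=
  quasi_interpolation_projector_general B S hS Om K hK hiK hindep c hc
end

section
/- The cubic B-spline quasi-interpolation matrix A = (1/48) * [[8,32,8,0,0],[1,23,23,1,0],[0,8,32,8,0],[0,1,23,23,1],[0,0,8,32,8]] is invertible, and the third row of its inverse equals the row vector omega = (1/6) * (1, -8, 20, -8, 1); equivalently, omega * A = (0,0,1,0,0). -/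
/-!
The collocation matrix `A` has the explicit rational inverse `cubicBSplineCollocationInv`
(obtained by Gaussian elimination); checking `A * A⁻¹ = 1` entrywise proves invertibility, `ω` is
read off as the middle row of that inverse, and `ω ᵥ* A = e₂` is the middle row of `A⁻¹ * A = 1`.
-/

open Matrix

theorem Matrix.inv_apply_vecMul_self {n R : Type*} [Fintype n] [DecidableEq n] [CommRing R]
    {M : Matrix n n R} (hM : IsUnit M) (i : n) : M⁻¹ i ᵥ* M = Pi.single i 1 := by
  rw [← mul_apply_eq_vecMul, nonsing_inv_mul _ ((isUnit_iff_isUnit_det M).mp hM)]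
  ext j
  exact one_eq_pi_single

noncomputable def cubicBSplineCollocation : Matrix (Fin 5) (Fin 5) ℝ :=
  (1/48 : ℝ) • !![8,32,8,0,0;
                  1,23,23,1,0;
                  0,8,32,8,0;
                  0,1,23,23,1;
                  0,0,8,32,8]

noncomputable def cubicBSplineCollocationInv : Matrix (Fin 5) (Fin 5) ℝ :=
  !![47/6, -44/3, 34/3, -4, 1/2;
     -1/2, 4, -11/3, 4/3, -1/6;
     1/6, -4/3, 10/3, -4/3, 1/6;
     -1/6, 4/3, -11/3, 4, -1/2;
     1/2, -4, 34/3, -44/3, 47/6]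

theorem cubicBSplineCollocation_mul_inv :
    cubicBSplineCollocation * cubicBSplineCollocationInv = 1 := by
  ext i j
  fin_cases i <;> fin_cases j <;>
    norm_num [cubicBSplineCollocation, cubicBSplineCollocationInv, mul_apply, Fin.sum_univ_succ,
      one_apply]

theorem cubicBSplineCollocationInv_row_two :
    cubicBSplineCollocationInv 2 = (1/6 : ℝ) • ![1,-8,20,-8,1] := by
  ext j
  fin_cases j <;> norm_num [cubicBSplineCollocationInv, cons_val_two, vecHead, vecTail]

/-- The cubic B-spline quasi-interpolation matrix `A` is invertible, the third
row of its inverse is `ω = (1/6) * (1, -8, 20, -8, 1)`, and equivalently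
`ω * A = (0,0,1,0,0)`. -/
theorem cubic_bspline_quasi_interpolation_weights :
    let A : Matrix (Fin 5) (Fin 5) ℝ :=
      (1/48 : ℝ) • !![8,32,8,0,0;
                      1,23,23,1,0;
                      0,8,32,8,0;
                      0,1,23,23,1;
                      0,0,8,32,8]
    let ω : Fin 5 → ℝ := (1/6 : ℝ) • ![1,-8,20,-8,1]
    IsUnit A ∧ A⁻¹ 2 = ω ∧ ω ᵥ* A = ![0,0,1,0,0] := by
  intro A ω
  have hAB : A * cubicBSplineCollocationInv = 1 := cubicBSplineCollocation_mul_inv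
  have hA : IsUnit A := .of_mul_eq_one _ hAB
  have hrow : A⁻¹ 2 = ω := by
    rw [inv_eq_right_inv hAB, cubicBSplineCollocationInv_row_two]
  refine ⟨hA, hrow, ?_⟩
  rw [← hrow, inv_apply_vecMul_self hA]
  ext j
  fin_cases j <;> rfl
end

section
/- Let n >= 3 be an integer and let alpha, beta be real numbers with alpha + n*beta = 1 and 3 + 8*n*beta != 0, and set tau = 8*beta/(3 + 8*n*beta). Let v and e_0,...,e_{n-1} be real numbers (indices taken modulo n), and define one step of Loop subdivision on the 1-ring by v' = alpha*v + beta*sum_{j=0}^{n-1} e_j and e'_j = (3/8)*(v + e_j) + (1/8)*(e_{j-1} + e_{j+1}). Then (1 - n*tau)*v' + tau*sum_{j=0}^{n-1} e'_j = (1 - n*tau)*v + tau*sum_{j=0}^{n-1} e_j. -/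
/-- The Loop subdivision limit-position mask `(1 - n τ, τ, …, τ)` with
`τ = 8β / (3 + 8 n β)` is invariant under one step of Loop subdivision
on the 1-ring of a vertex of valence `n`. -/
theorem loop_limit_mask_invariant
    (n : ℕ) [NeZero n] (hn : 3 ≤ n) (α β : ℝ)
    (hαβ : α + n * β = 1) (hden : 3 + 8 * n * β ≠ 0)
    (τ : ℝ) (hτ : τ = 8 * β / (3 + 8 * n * β))
    (v : ℝ) (e : ZMod n → ℝ)
    (v' : ℝ) (hv' : v' = α * v + β * ∑ j, e j)
    (e' : ZMod n → ℝ)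
    (he' : ∀ j, e' j = 3/8 * (v + e j) + 1/8 * (e (j - 1) + e (j + 1))) :
    (1 - n * τ) * v' + τ * ∑ j, e' j = (1 - n * τ) * v + τ * ∑ j, e j := by
  have hsub : (∑ j : ZMod n, e (j - 1)) = ∑ j, e j :=
    Fintype.sum_equiv (Equiv.subRight (1 : ZMod n)) _ _ (fun j => rfl)
  have hadd : (∑ j : ZMod n, e (j + 1)) = ∑ j, e j :=
    Fintype.sum_equiv (Equiv.addRight (1 : ZMod n)) _ _ (fun j => rfl)
  have hsum : (∑ j, e' j) = (3/8 * n) * v + (5/8) * ∑ j, e j := by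
    simp only [he']
    push_cast
    rw [Finset.sum_add_distrib, ← Finset.mul_sum, ← Finset.mul_sum,
      Finset.sum_add_distrib, Finset.sum_add_distrib, hsub, hadd,
      Finset.sum_const, Finset.card_univ, ZMod.card]
    push_cast
    ring
  have hα : α = 1 - n * β := by linarith
  have hτ' : τ * (3 + 8 * n * β) = 8 * β := by
    rw [hτ, div_mul_cancel₀ _ hden]
  rw [hv', hsum, hα]
  linear_combination (((n : ℝ) * v - ∑ j, e j) / 8) * hτ'
end

section
/- Let n >= 3 be an integer and let alpha, beta, gamma, gamma_0,...,gamma_{n-1} be real numbers with alpha + n*beta = 1, gamma + sum_{j=0}^{n-1} gamma_j = 1 and gamma + n*beta != 0, and set tau = beta/(gamma + n*beta). Let v and e_0,...,e_{n-1} be real numbers (indices modulo n), and define one step of modified Loop subdivision on the 1-ring by v' = alpha*v + beta*sum_{j=0}^{n-1} e_j and e'_k = gamma*v + sum_{j=0}^{n-1} gamma_j * e_{j+k} for k = 0,...,n-1. Then (1 - n*tau)*v' + tau*sum_{k=0}^{n-1} e'_k = (1 - n*tau)*v + tau*sum_{j=0}^{n-1} e_j. -/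
/-! The edge rule is a circulant convolution, so summing it over the ring gives
`Σ e' = n γ v + (1 - γ) Σ e`. Substituting this and `α = 1 - n β` into the new limit position,
the change is `(n v - Σ e) (β - τ (γ + n β))`, which vanishes for `τ = β / (γ + n β)`. -/

theorem Fintype.sum_sum_mul_comp_add {G R : Type*} [AddGroup G] [Fintype G]
    [NonUnitalNonAssocSemiring R] (c f : G → R) :
    ∑ k, ∑ j, c j * f (j + k) = (∑ j, c j) * ∑ j, f j := by
  rw [Finset.sum_comm, Finset.sum_mul]
  refine Finset.sum_congr rfl fun j _ => ?_
  rw [← Finset.mul_sum, ← Equiv.sum_comp (Equiv.addLeft j) f]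
  rfl

theorem modified_loop_limit_mask_invariant_general
    (n : ℕ) [NeZero n] (α β γ : ℝ) (γs : ZMod n → ℝ)
    (hαβ : α + n * β = 1) (hγ : γ + ∑ j, γs j = 1)
    (hden : γ + n * β ≠ 0)
    (τ : ℝ) (hτ : τ = β / (γ + n * β))
    (v : ℝ) (e : ZMod n → ℝ)
    (v' : ℝ) (hv' : v' = α * v + β * ∑ j, e j)
    (e' : ZMod n → ℝ)
    (he' : ∀ k, e' k = γ * v + ∑ j, γs j * e (j + k)) :
    (1 - n * τ) * v' + τ * ∑ k, e' k = (1 - n * τ) * v + τ * ∑ j, e j := by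
  have hτ_mul : τ * (γ + n * β) = β := by
    rw [hτ, div_mul_cancel₀ β hden]
  have hsum_e' : ∑ k, e' k = n * (γ * v) + (1 - γ) * ∑ j, e j := by
    simp only [he', Finset.sum_add_distrib, Fintype.sum_sum_mul_comp_add, Finset.sum_const,
      Finset.card_univ, ZMod.card, nsmul_eq_mul]
    rw [← hγ, add_sub_cancel_left]
  rw [hsum_e', hv', eq_sub_of_add_eq hαβ]
  linear_combination (n * v - ∑ j, e j) * hτ_mul

/-- The modified Loop subdivision limit-position mask `(1 - n τ, τ, …, τ)` with
`τ = β / (γ + n β)` is invariant under one step of modified Loop subdivision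
on the 1-ring of a vertex of valence `n`. -/
theorem modified_loop_limit_mask_invariant
    (n : ℕ) [NeZero n] (hn : 3 ≤ n) (α β γ : ℝ) (γs : ZMod n → ℝ)
    (hαβ : α + n * β = 1) (hγ : γ + ∑ j, γs j = 1)
    (hden : γ + n * β ≠ 0)
    (τ : ℝ) (hτ : τ = β / (γ + n * β))
    (v : ℝ) (e : ZMod n → ℝ)
    (v' : ℝ) (hv' : v' = α * v + β * ∑ j, e j)
    (e' : ZMod n → ℝ)
    (he' : ∀ k, e' k = γ * v + ∑ j, γs j * e (j + k)) :
    (1 - n * τ) * v' + τ * ∑ k, e' k = (1 - n * τ) * v + τ * ∑ j, e j :=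
  modified_loop_limit_mask_invariant_general n α β γ γs hαβ hγ hden τ hτ v e v' hv' e' he'
end

section
/- Let n >= 3 be an integer and let v, e_0,...,e_{n-1}, f_0,...,f_{n-1} be real numbers (indices modulo n). Define one step of Catmull-Clark subdivision on the 1-ring by: f'_j = (v + e_j + e_{j+1} + f_j)/4 for j = 0,...,n-1; e'_j = (v + e_j + f'_{j-1} + f'_j)/4 for j = 0,...,n-1; and v' = ((n-2)/n)*v + (1/n^2)*sum_{j=0}^{n-1} e_j + (1/n^2)*sum_{j=0}^{n-1} f'_j. Then n^2 * v' + 4 * sum_{j=0}^{n-1} e'_j + sum_{j=0}^{n-1} f'_j = n^2 * v + 4 * sum_{j=0}^{n-1} e_j + sum_{j=0}^{n-1} f_j. -/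
/-- The Halstead limit-position functional `n² v + 4 ∑ eⱼ + ∑ fⱼ` is invariant
under one step of Catmull–Clark subdivision on the 1-ring of a vertex of
valence `n`. -/
theorem catmull_clark_limit_mask_invariant
    (n : ℕ) [NeZero n] (hn : 3 ≤ n)
    (v : ℝ) (e f : ZMod n → ℝ)
    (f' : ZMod n → ℝ) (hf' : ∀ j, f' j = (v + e j + e (j + 1) + f j) / 4)
    (e' : ZMod n → ℝ) (he' : ∀ j, e' j = (v + e j + f' (j - 1) + f' j) / 4)
    (v' : ℝ)
    (hv' : v' = ((n : ℝ) - 2) / n * v + (1 / (n : ℝ)^2) * ∑ j, e j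
        + (1 / (n : ℝ)^2) * ∑ j, f' j) :
    (n : ℝ)^2 * v' + 4 * ∑ j, e' j + ∑ j, f' j
      = (n : ℝ)^2 * v + 4 * ∑ j, e j + ∑ j, f j := by
  have hn0 : (n : ℝ) ≠ 0 := Nat.cast_ne_zero.mpr (NeZero.ne n)
  have hshift : ∑ j, e (j + 1) = ∑ j, e j :=
    Fintype.sum_equiv (Equiv.addRight 1) _ _ (fun j => rfl)
  have hshift' : ∑ j, f' (j - 1) = ∑ j, f' j :=
    Fintype.sum_equiv (Equiv.subRight 1) _ _ (fun j => rfl)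
  have hF : ∑ j, f' j = ((n : ℝ) * v + 2 * ∑ j, e j + ∑ j, f j) / 4 := by
    simp_rw [hf']
    rw [← Finset.sum_div]
    simp_rw [Finset.sum_add_distrib, Finset.sum_const, Finset.card_univ,
      ZMod.card, nsmul_eq_mul, hshift]
    ring
  have hE : ∑ j, e' j = ((n : ℝ) * v + ∑ j, e j + 2 * ∑ j, f' j) / 4 := by
    simp_rw [he']
    rw [← Finset.sum_div]
    simp_rw [Finset.sum_add_distrib, Finset.sum_const, Finset.card_univ,
      ZMod.card, nsmul_eq_mul, hshift']
    ring
  rw [hv', hE, hF]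
  field_simp
  ring
end
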